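/- Let λ, α, β, θ be real numbers. On the 4-dimensional real vector space with basis {A, X, Z, W}, let ⁅·,·⁆ be the unique antisymmetric bilinear bracket determined on basis pairs by ⁅A,X⁆ = λX, ⁅A,Z⁆ = αZ + βW, ⁅A,W⁆ = −βZ + αW, ⁅Z,W⁆ = θX, and ⁅X,Z⁆ = ⁅X,W⁆ = 0. Then this bracket satisfies the Jacobi identity (and hence defines a Lie algebra structure) if and only if θ·(λ − 2α) = 0. -/

import Mathlib

/-!
The Jacobiator is trilinear, so it vanishes iff it vanishes on basis triples. On those it
vanishes identically except at permutations of `(A, Z, W)`, where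
`J(A, Z, W) = θ(λ − 2α) X`: `ad A` scales `⁅Z, W⁆ = θX` by `λ`, while it acts on `span {Z, W}`
by a matrix of trace `2α`.
-/

section Jacobiator

variable {R V : Type*} [CommRing R] [AddCommGroup V] [Module R V]

def jacobiator (B : V →ₗ[R] V →ₗ[R] V) : V →ₗ[R] V →ₗ[R] V →ₗ[R] V :=
  LinearMap.mk₂ R (fun u v => (B u).comp (B v) + (B v).comp (B.flip u) + B.flip (B u v))
    (by intro u u' v; ext w; simp; abel)
    (by intro c u v; ext w; simp)
    (by intro u v v'; ext w; simp; abel)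
    (by intro c u v; ext w; simp [smul_add])

@[simp]
theorem jacobiator_apply (B : V →ₗ[R] V →ₗ[R] V) (u v w : V) :
    jacobiator B u v w = B u (B v w) + B v (B w u) + B w (B u v) :=
  rfl

theorem jacobiator_eq_zero_iff (B : V →ₗ[R] V →ₗ[R] V) :
    jacobiator B = 0 ↔ ∀ u v w : V, B u (B v w) + B v (B w u) + B w (B u v) = 0 := by
  simp only [LinearMap.ext_iff, LinearMap.zero_apply, jacobiator_apply]

theorem jacobiator_eq_zero_iff_basis {ι : Type*} (B : V →ₗ[R] V →ₗ[R] V)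
    (e : Module.Basis ι R V) :
    jacobiator B = 0 ↔ ∀ i j k, jacobiator B (e i) (e j) (e k) = 0 := by
  refine ⟨fun h i j k => by simp only [h, LinearMap.zero_apply], fun h => ?_⟩
  refine e.ext fun i => e.ext fun j => e.ext fun k => ?_
  simpa using h i j k

end Jacobiator

section Type112

variable {R V : Type*} [CommRing R] [AddCommGroup V] [Module R V]

-- `e 0, e 1, e 2, e 3` play the roles of `A, X, Z, W`.
structure IsBracket112 (B : V →ₗ[R] V →ₗ[R] V) (e : Module.Basis (Fin 4) R V)
    (lam α β θ : R) : Prop where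
  anti : ∀ u v : V, B u v = - B v u
  AX : B (e 0) (e 1) = lam • e 1
  AZ : B (e 0) (e 2) = α • e 2 + β • e 3
  AW : B (e 0) (e 3) = -β • e 2 + α • e 3
  XZ : B (e 1) (e 2) = 0
  XW : B (e 1) (e 3) = 0
  ZW : B (e 2) (e 3) = θ • e 1

namespace IsBracket112

variable {B : V →ₗ[R] V →ₗ[R] V} {e : Module.Basis (Fin 4) R V} {lam α β θ : R}

theorem apply_self [IsAddTorsionFree V] (hB : IsBracket112 B e lam α β θ) (u : V) : B u u = 0 :=
  self_eq_neg.mp (hB.anti u u)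

theorem XA (hB : IsBracket112 B e lam α β θ) : B (e 1) (e 0) = -(lam • e 1) := by
  rw [hB.anti, hB.AX]

theorem ZA (hB : IsBracket112 B e lam α β θ) : B (e 2) (e 0) = -(α • e 2 + β • e 3) := by
  rw [hB.anti, hB.AZ]

theorem WA (hB : IsBracket112 B e lam α β θ) : B (e 3) (e 0) = -(-β • e 2 + α • e 3) := by
  rw [hB.anti, hB.AW]

theorem ZX (hB : IsBracket112 B e lam α β θ) : B (e 2) (e 1) = 0 := by
  rw [hB.anti, hB.XZ, neg_zero]

theorem WX (hB : IsBracket112 B e lam α β θ) : B (e 3) (e 1) = 0 := by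
  rw [hB.anti, hB.XW, neg_zero]

theorem WZ (hB : IsBracket112 B e lam α β θ) : B (e 3) (e 2) = -(θ • e 1) := by
  rw [hB.anti, hB.ZW]

theorem jacobiator_A_Z_W [IsAddTorsionFree V] (hB : IsBracket112 B e lam α β θ) :
    jacobiator B (e 0) (e 2) (e 3) = (θ * (lam - 2 * α)) • e 1 := by
  simp only [jacobiator_apply, hB.ZW, hB.WA, hB.AZ, map_add, map_neg, map_smul, hB.AX,
    hB.apply_self, hB.WZ]
  module

theorem jacobiator_basis_eq_zero [IsAddTorsionFree V] (hB : IsBracket112 B e lam α β θ)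
    (h : θ * (lam - 2 * α) = 0) (i j k : Fin 4) :
    jacobiator B (e i) (e j) (e k) = 0 := by
  fin_cases i <;> fin_cases j <;> fin_cases k <;>
    simp only [Fin.zero_eta, Fin.mk_one, Fin.reduceFinMk, jacobiator_apply, hB.apply_self, hB.AX,
      hB.AZ, hB.AW, hB.XZ, hB.XW, hB.ZW, hB.XA, hB.ZA, hB.WA, hB.ZX, hB.WX, hB.WZ, map_add,
      map_neg, map_smul, map_zero] <;>
    first
      | module
      | linear_combination (norm := module) h • e 1
      | linear_combination (norm := module) -h • e 1

end IsBracket112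

end Type112

/-- The case `dim(𝔞,𝔨,𝔪) = (1,1,2)`: the antisymmetric bilinear bracket on the
4-dimensional real vector space with basis `{A, X, Z, W}` (here `e 0 = A`, `e 1 = X`,
`e 2 = Z`, `e 3 = W`) determined by `⁅A,X⁆ = λX`, `⁅A,Z⁆ = αZ + βW`,
`⁅A,W⁆ = −βZ + αW`, `⁅Z,W⁆ = θX`, `⁅X,Z⁆ = ⁅X,W⁆ = 0` satisfies the Jacobi
identity iff `θ(λ − 2α) = 0`. -/
theorem jacobi_iff_dim_1_1_2 {V : Type*} [AddCommGroup V] [Module ℝ V]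
    (e : Module.Basis (Fin 4) ℝ V) (lam α β θ : ℝ)
    (B : V →ₗ[ℝ] V →ₗ[ℝ] V)
    (hanti : ∀ u v : V, B u v = - B v u)
    (hAX : B (e 0) (e 1) = lam • e 1)
    (hAZ : B (e 0) (e 2) = α • e 2 + β • e 3)
    (hAW : B (e 0) (e 3) = -β • e 2 + α • e 3)
    (hXZ : B (e 1) (e 2) = 0)
    (hXW : B (e 1) (e 3) = 0)
    (hZW : B (e 2) (e 3) = θ • e 1) :
    (∀ u v w : V, B u (B v w) + B v (B w u) + B w (B u v) = 0) ↔
      θ * (lam - 2 * α) = 0 := by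
  have : IsAddTorsionFree V := .of_isTorsionFree ℝ V
  have hB : IsBracket112 B e lam α β θ := ⟨hanti, hAX, hAZ, hAW, hXZ, hXW, hZW⟩
  rw [← jacobiator_eq_zero_iff, jacobiator_eq_zero_iff_basis B e]
  refine ⟨fun h => ?_, fun h => hB.jacobiator_basis_eq_zero h⟩
  have hX : (θ * (lam - 2 * α)) • e 1 = 0 := hB.jacobiator_A_Z_W ▸ h 0 2 3
  exact (smul_eq_zero.mp hX).resolve_right (e.ne_zero 1)
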